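/- For all ε with 0 < ε < e^{−2}, the inverse of the standard Gaussian cumulative distribution function satisfies Φ^{−1}(ε/2) − Φ^{−1}(ε/4) ≥ √(2π)/(4·log(1/ε)). -/

import Mathlib

/-!
Write `x = -a`, `y = -b`, `L = log (1 / ε)` and `m x = π / (√(x² + 2π) + (π - 1) x)`.
Since `-t²/2` is concave, `φ t ≤ φ x * e^{-x (t - x)}`, hence
`ε / 4 = Φ(-x) - Φ(-y) ≤ φ x (1 - e^{-x (y - x)}) / x`; with Boyd's lower bound
`Φ(-x) ≥ φ x * m x` on the Mills ratio this gives `x m(x) / 2 ≤ 1 - e^{-x (a - b)}`.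
So it suffices that `1 - e^{-x √(2π) / (4L)} ≤ x m(x) / 2`. Here `x ≥ 1.45` because `ε < e⁻²`, and
`L > 2`; for `x ≥ 1.5`, Boyd's upper bound `Φ(-x) ≤ φ x * 2 / (√(x² + 8/π) + x)` also gives
`L ≥ x²/2 + 0.835`. This makes the inequality a numerical check, on `[1.45, 1.5]` and on `[1.5, ∞)`.

Both Mills-ratio bounds come from one identity: `-(φ R)` has derivative `φ (t R - R')`, so
`∫_x^∞ φ (t R - R') = φ x * R x` for bounded `R`, and it remains to compare `t R - R'` with `1`.
-/

open MeasureTheory Real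

noncomputable section

/-- The standard Gaussian cumulative distribution function
`Φ(z) = ∫_{-∞}^z (2π)^{-1/2} e^{-t²/2} dt`. -/
def gaussCdf (z : ℝ) : ℝ :=
  ∫ t in Set.Iic z, (Real.sqrt (2 * Real.pi))⁻¹ * Real.exp (-t ^ 2 / 2)

open Set Filter Topology

def gaussPdf (t : ℝ) : ℝ := (√(2 * π))⁻¹ * exp (-t ^ 2 / 2)

lemma gaussPdf_pos (t : ℝ) : 0 < gaussPdf t := by
  unfold gaussPdf; positivity

lemma gaussPdf_neg (t : ℝ) : gaussPdf (-t) = gaussPdf t := by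
  simp [gaussPdf]

lemma continuous_gaussPdf : Continuous gaussPdf := by
  unfold gaussPdf; fun_prop

lemma integrable_gaussPdf : Integrable gaussPdf := by
  refine ((integrable_exp_neg_mul_sq (b := 1 / 2) (by norm_num)).const_mul
    (√(2 * π))⁻¹).congr (Eventually.of_forall fun t => ?_)
  simp only [gaussPdf]; ring_nf

lemma hasDerivAt_gaussPdf (t : ℝ) : HasDerivAt gaussPdf (-t * gaussPdf t) t := by
  have h : HasDerivAt (fun u : ℝ => -u ^ 2 / 2) (-t) t := by
    simpa [neg_div] using ((hasDerivAt_pow 2 t).neg).div_const 2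
  exact (h.exp.const_mul (√(2 * π))⁻¹).congr_deriv (by simp only [gaussPdf]; ring)

lemma tendsto_gaussPdf_atTop : Tendsto gaussPdf atTop (𝓝 0) := by
  have h : Tendsto (fun t : ℝ => -t ^ 2 / 2) atTop atBot :=
    (tendsto_neg_atTop_atBot.comp (tendsto_pow_atTop two_ne_zero)).atBot_div_const two_pos
  exact mul_zero (√(2 * π))⁻¹ ▸ (tendsto_exp_atBot.comp h).const_mul (√(2 * π))⁻¹

lemma gaussPdf_le_mul_exp (x t : ℝ) : gaussPdf t ≤ gaussPdf x * exp (-(x * (t - x))) := by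
  rw [gaussPdf, gaussPdf, mul_assoc, ← exp_add]
  gcongr
  nlinarith [sq_nonneg (t - x)]

lemma gaussCdf_eq_integral (z : ℝ) : gaussCdf z = ∫ t in Iic z, gaussPdf t := rfl

lemma gaussCdf_mono : Monotone gaussCdf := fun _ _ h =>
  setIntegral_mono_set integrable_gaussPdf.integrableOn
    (Eventually.of_forall fun t => (gaussPdf_pos t).le) (Iic_subset_Iic.2 h).eventuallyLE

lemma gaussCdf_neg_eq_integral_Ioi (x : ℝ) : gaussCdf (-x) = ∫ t in Ioi x, gaussPdf t := by
  simp [gaussCdf_eq_integral, ← integral_comp_neg_Ioi, gaussPdf_neg]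

lemma gaussCdf_neg_sub_gaussCdf_neg_eq_intervalIntegral (x y : ℝ) :
    gaussCdf (-x) - gaussCdf (-y) = ∫ t in x..y, gaussPdf t := by
  rw [gaussCdf_eq_integral, gaussCdf_eq_integral, intervalIntegral.integral_Iic_sub_Iic
    integrable_gaussPdf.integrableOn integrable_gaussPdf.integrableOn,
    ← intervalIntegral.integral_comp_neg]
  simp only [gaussPdf_neg]

section MillsRatio

variable {R : ℝ → ℝ} {x C : ℝ}

lemma tendsto_gaussPdf_mul_atTop (hC : ∀ t ∈ Ici x, |R t| ≤ C) :
    Tendsto (fun t => gaussPdf t * R t) atTop (𝓝 0) :=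
  tendsto_gaussPdf_atTop.zero_mul_isBoundedUnder_le
    (isBoundedUnder_of_eventually_le (a := C) (eventually_ge_atTop x |>.mono hC))

lemma hasDerivAt_neg_gaussPdf_mul {t : ℝ} (hR : DifferentiableAt ℝ R t) :
    HasDerivAt (fun u => -(gaussPdf u * R u)) (gaussPdf t * (t * R t - deriv R t)) t :=
  ((hasDerivAt_gaussPdf t).mul hR.hasDerivAt).neg.congr_deriv (by ring)

lemma integrableOn_Ioi_gaussPdf_mul (hR : ∀ t ∈ Ici x, DifferentiableAt ℝ R t)
    (hC : ∀ t ∈ Ici x, |R t| ≤ C) (h0 : ∀ t ∈ Ioi x, 0 ≤ t * R t - deriv R t) :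
    IntegrableOn (fun t => gaussPdf t * (t * R t - deriv R t)) (Ioi x) :=
  integrableOn_Ioi_deriv_of_nonneg' (fun t ht => hasDerivAt_neg_gaussPdf_mul (hR t ht))
    (fun t ht => mul_nonneg (gaussPdf_pos t).le (h0 t ht))
    (by simpa using (tendsto_gaussPdf_mul_atTop hC).neg)

lemma integral_Ioi_gaussPdf_mul (hR : ∀ t ∈ Ici x, DifferentiableAt ℝ R t)
    (hC : ∀ t ∈ Ici x, |R t| ≤ C) (h0 : ∀ t ∈ Ioi x, 0 ≤ t * R t - deriv R t) :
    ∫ t in Ioi x, gaussPdf t * (t * R t - deriv R t) = gaussPdf x * R x := by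
  rw [integral_Ioi_of_hasDerivAt_of_nonneg' (fun t ht => hasDerivAt_neg_gaussPdf_mul (hR t ht))
    (fun t ht => mul_nonneg (gaussPdf_pos t).le (h0 t ht))
    (by simpa using (tendsto_gaussPdf_mul_atTop hC).neg), zero_sub, neg_neg]

lemma gaussPdf_mul_le_gaussCdf_neg (hR : ∀ t ∈ Ici x, DifferentiableAt ℝ R t)
    (hC : ∀ t ∈ Ici x, |R t| ≤ C) (h : ∀ t ∈ Ioi x, t * R t - deriv R t ∈ Icc 0 1) :
    gaussPdf x * R x ≤ gaussCdf (-x) := by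
  have h0 := fun t ht => (h t ht).1
  rw [gaussCdf_neg_eq_integral_Ioi, ← integral_Ioi_gaussPdf_mul hR hC h0]
  exact setIntegral_mono_on (integrableOn_Ioi_gaussPdf_mul hR hC h0)
    integrable_gaussPdf.integrableOn measurableSet_Ioi
    fun t ht => mul_le_of_le_one_right (gaussPdf_pos t).le (h t ht).2

lemma gaussCdf_neg_le_gaussPdf_mul (hR : ∀ t ∈ Ici x, DifferentiableAt ℝ R t)
    (hC : ∀ t ∈ Ici x, |R t| ≤ C) (h : ∀ t ∈ Ioi x, 1 ≤ t * R t - deriv R t) :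
    gaussCdf (-x) ≤ gaussPdf x * R x := by
  have h0 := fun t ht => zero_le_one.trans (h t ht)
  rw [gaussCdf_neg_eq_integral_Ioi, ← integral_Ioi_gaussPdf_mul hR hC h0]
  exact setIntegral_mono_on integrable_gaussPdf.integrableOn
    (integrableOn_Ioi_gaussPdf_mul hR hC h0) measurableSet_Ioi
    fun t ht => le_mul_of_one_le_right (gaussPdf_pos t).le (h t ht)

end MillsRatio

lemma hasDerivAt_sqrt_sq_add {k : ℝ} (hk : 0 < k) (t : ℝ) :
    HasDerivAt (fun u => √(u ^ 2 + k)) (t / √(t ^ 2 + k)) t :=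
  ((hasDerivAt_pow 2 t).add_const k).sqrt (by positivity) |>.congr_deriv (by field_simp; ring)

def millsLower (x : ℝ) : ℝ := π / (√(x ^ 2 + 2 * π) + (π - 1) * x)

lemma hasDerivAt_millsLower {t : ℝ} (ht : 0 ≤ t) :
    HasDerivAt millsLower
      (-(π * (t / √(t ^ 2 + 2 * π) + (π - 1))) / (√(t ^ 2 + 2 * π) + (π - 1) * t) ^ 2) t := by
  have hD : 0 < √(t ^ 2 + 2 * π) + (π - 1) * t :=
    add_pos_of_pos_of_nonneg (by positivity) (mul_nonneg (by linarith [pi_gt_three]) ht)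
  have h := (hasDerivAt_const t π).div
    ((hasDerivAt_sqrt_sq_add two_pi_pos t).add ((hasDerivAt_id t).const_mul (π - 1))) hD.ne'
  exact h.congr_deriv (by simp)

lemma millsLower_abs_le {t : ℝ} (ht : 1 / 2 ≤ t) : |millsLower t| ≤ π := by
  have hπ := pi_gt_three
  have hD : 1 ≤ √(t ^ 2 + 2 * π) + (π - 1) * t := by nlinarith [sqrt_nonneg (t ^ 2 + 2 * π)]
  rw [millsLower, abs_of_pos (by positivity), div_le_iff₀ (by positivity)]
  nlinarith

lemma mul_millsLower_sub_deriv_mem_Icc {t : ℝ} (ht : 1 / 2 ≤ t) :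
    t * millsLower t - deriv millsLower t ∈ Icc 0 1 := by
  have hπ := pi_gt_d2
  have hπ' := pi_lt_d2
  have hS := sq_sqrt (by positivity : 0 ≤ t ^ 2 + 2 * π)
  have hS0 : 0 < √(t ^ 2 + 2 * π) := sqrt_pos.2 (by positivity)
  rw [(hasDerivAt_millsLower (by linarith)).deriv, millsLower]
  set S := √(t ^ 2 + 2 * π)
  set D := S + (π - 1) * t
  have hD : 0 < D := by nlinarith
  have hform : t * (π / D) - -(π * (t / S + (π - 1))) / D ^ 2
      = π * (t * D * S + t + (π - 1) * S) / (D ^ 2 * S) := by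
    field_simp; ring
  rw [hform, mem_Icc, div_le_one (by positivity)]
  have := mul_pos (mul_pos (by linarith : 0 < t) hD) hS0
  have := mul_pos (by linarith : 0 < π - 1) hS0
  refine ⟨div_nonneg (by nlinarith) (by positivity), ?_⟩
  -- Multiplied by `(S + t)²`, the claim becomes `(π - 3) S ≤ t`, using `(S - t)(S + t) = 2π`.
  have hsq : (S - t) * (S + t) = 2 * π := by linear_combination hS
  have hS52 : (π - 3) * S ≤ t := by
    have : S ≤ 5.2 * t := abs_le_of_sq_le_sq' (by nlinarith) (by linarith) |>.2
    nlinarith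
  have hE : (2 * D * S - (t + (π - 1) * S) * (S + t)) * (S + t) = 2 * π * (t - (π - 3) * S) := by
    linear_combination (3 - π) * (S + t) * hS + (π - 2) * t * hsq
  have hE0 : 0 ≤ 2 * D * S - (t + (π - 1) * S) * (S + t) :=
    nonneg_of_mul_nonneg_left (hE ▸ by nlinarith) (by linarith : 0 < S + t)
  have hmain : (D ^ 2 * S - π * (t * D * S + t + (π - 1) * S)) * (S + t)
      = π * (2 * D * S - (t + (π - 1) * S) * (S + t)) := by
    linear_combination D * S * hsq
  nlinarith

lemma gaussPdf_mul_millsLower_le_gaussCdf_neg {x : ℝ} (hx : 1 / 2 ≤ x) :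
    gaussPdf x * millsLower x ≤ gaussCdf (-x) :=
  gaussPdf_mul_le_gaussCdf_neg
    (fun t ht => (hasDerivAt_millsLower (by linarith [mem_Ici.1 ht])).differentiableAt)
    (fun t ht => millsLower_abs_le (hx.trans ht))
    fun t ht => mul_millsLower_sub_deriv_mem_Icc (hx.trans (le_of_lt ht))

def millsUpper (x : ℝ) : ℝ := 2 / (√(x ^ 2 + 8 / π) + x)

lemma hasDerivAt_millsUpper {t : ℝ} (ht : 0 ≤ t) :
    HasDerivAt millsUpper (-(2 * (t / √(t ^ 2 + 8 / π) + 1)) / (√(t ^ 2 + 8 / π) + t) ^ 2) t := by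
  have hE : 0 < √(t ^ 2 + 8 / π) + t :=
    add_pos_of_pos_of_nonneg (sqrt_pos.2 (by positivity)) ht
  have h := (hasDerivAt_const t (2 : ℝ)).div
    ((hasDerivAt_sqrt_sq_add (by positivity) t).add (hasDerivAt_id t)) hE.ne'
  exact h.congr_deriv (by simp)

lemma millsUpper_abs_le {t : ℝ} (ht : 1 ≤ t) : |millsUpper t| ≤ 2 := by
  have hE : 1 ≤ √(t ^ 2 + 8 / π) + t := by linarith [sqrt_nonneg (t ^ 2 + 8 / π)]
  rw [millsUpper, abs_of_pos (by positivity), div_le_iff₀ (by positivity)]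
  linarith

lemma one_le_mul_millsUpper_sub_deriv {t : ℝ} (ht : 1 ≤ t) :
    1 ≤ t * millsUpper t - deriv millsUpper t := by
  have hT := sq_sqrt (by positivity : 0 ≤ t ^ 2 + 8 / π)
  have hT0 : 0 < √(t ^ 2 + 8 / π) := sqrt_pos.2 (by positivity)
  rw [(hasDerivAt_millsUpper (by linarith)).deriv, millsUpper]
  set T := √(t ^ 2 + 8 / π)
  have hform : t * (2 / (T + t)) - -(2 * (t / T + 1)) / (T + t) ^ 2
      = 2 * (t * (T + t) * T + t + T) / ((T + t) ^ 2 * T) := by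
    field_simp; ring
  rw [hform, one_le_div (by positivity)]
  have hk : 8 / π < 3 := by rw [div_lt_iff₀ pi_pos]; linarith [pi_gt_three]
  have hT2 : T ≤ 2 * t := abs_le_of_sq_le_sq' (by nlinarith) (by linarith) |>.2
  have hid : (T + t) ^ 2 * T - 2 * t * (T + t) * T = 8 / π * T := by
    linear_combination T * hT
  nlinarith [mul_le_mul_of_nonneg_right hk.le hT0.le]

lemma gaussCdf_neg_le_gaussPdf_mul_millsUpper {x : ℝ} (hx : 1 ≤ x) :
    gaussCdf (-x) ≤ gaussPdf x * millsUpper x :=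
  gaussCdf_neg_le_gaussPdf_mul
    (fun t ht => (hasDerivAt_millsUpper (by linarith [mem_Ici.1 ht])).differentiableAt)
    (fun t ht => millsUpper_abs_le (hx.trans ht))
    fun t ht => one_le_mul_millsUpper_sub_deriv (hx.trans (le_of_lt ht))

lemma monotoneOn_mul_millsLower : MonotoneOn (fun x => x * millsLower x) (Ioi 0) := by
  intro u (hu : 0 < u) x (hx : 0 < x) hux
  have hπ := pi_gt_three
  have hSu := sqrt_pos.2 (by positivity : 0 < u ^ 2 + 2 * π)
  have hSx := sqrt_pos.2 (by positivity : 0 < x ^ 2 + 2 * π)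
  have hkey : u * √(x ^ 2 + 2 * π) ≤ x * √(u ^ 2 + 2 * π) := by
    refine abs_le_of_sq_le_sq' ?_ (by positivity) |>.2
    rw [mul_pow, mul_pow, sq_sqrt (by positivity), sq_sqrt (by positivity)]
    nlinarith [mul_le_mul hux hux hu.le (hu.le.trans hux)]
  simp only [millsLower, mul_div_assoc']
  rw [div_le_div_iff₀ (by nlinarith) (by nlinarith)]
  nlinarith [mul_le_mul_of_nonneg_left hkey pi_pos.le]

lemma div_le_millsLower {u Su : ℝ} (hu : 0 ≤ u) (hSu0 : 0 ≤ Su)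
    (hSu : u ^ 2 + 6.283186 ≤ Su ^ 2) : 3.141592 / (Su + 2.141593 * u) ≤ millsLower u := by
  have hπ := pi_gt_d6
  have hπ' := pi_lt_d6
  have hS : √(u ^ 2 + 2 * π) ≤ Su := (sqrt_le_left hSu0).2 (by linarith)
  have hS0 : 0 < √(u ^ 2 + 2 * π) := sqrt_pos.2 (by positivity)
  exact div_le_div₀ pi_pos.le (by linarith) (by nlinarith) (by nlinarith)

lemma integral_exp_neg_mul_sub {x : ℝ} (hx : x ≠ 0) (y : ℝ) :
    ∫ t in x..y, exp (-(x * (t - x))) = (1 - exp (-(x * (y - x)))) / x := by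
  have h : ∀ t ∈ uIcc x y,
      HasDerivAt (fun u => -exp (-(x * (u - x))) / x) (exp (-(x * (t - x)))) t := fun t _ =>
    ((((hasDerivAt_id t).sub_const x).const_mul x).neg.exp).neg.div_const x |>.congr_deriv
      (by field_simp; simp)
  rw [intervalIntegral.integral_eq_sub_of_hasDerivAt h
    ((by fun_prop : Continuous _).intervalIntegrable _ _)]
  simp only [sub_self, mul_zero, neg_zero, exp_zero]; ring

lemma gaussCdf_neg_sub_gaussCdf_neg_le {x y : ℝ} (hx : 0 < x) (hxy : x ≤ y) :
    gaussCdf (-x) - gaussCdf (-y) ≤ gaussPdf x * ((1 - exp (-(x * (y - x)))) / x) := by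
  rw [gaussCdf_neg_sub_gaussCdf_neg_eq_intervalIntegral, ← integral_exp_neg_mul_sub hx.ne',
    ← intervalIntegral.integral_const_mul]
  exact intervalIntegral.integral_mono_on hxy
    (continuous_gaussPdf.intervalIntegrable _ _)
    ((by fun_prop : Continuous _).intervalIntegrable _ _) fun t _ => gaussPdf_le_mul_exp x t

lemma mul_millsLower_le_one_sub_exp {x y : ℝ} (hx : 1 / 2 ≤ x) (hxy : x ≤ y)
    (h : gaussCdf (-x) = 2 * gaussCdf (-y)) :
    x * millsLower x / 2 ≤ 1 - exp (-(x * (y - x))) := by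
  have hx0 : 0 < x := by linarith
  have hlow := gaussPdf_mul_millsLower_le_gaussCdf_neg hx
  have hup := gaussCdf_neg_sub_gaussCdf_neg_le hx0 hxy
  have : millsLower x ≤ 2 * (1 - exp (-(x * (y - x)))) / x := by
    rw [mul_div_assoc]; exact le_of_mul_le_mul_left (by linarith) (gaussPdf_pos x)
  rw [le_div_iff₀ hx0] at this
  linarith

lemma sqrt_two_pi_lt : √(2 * π) < 2.5066285 :=
  (sqrt_lt' (by norm_num)).2 (by nlinarith [pi_lt_d6])

lemma lt_sqrt_two_pi : 2.5066 < √(2 * π) :=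
  (lt_sqrt (by norm_num)).2 (by nlinarith [pi_gt_d6])

lemma one_sub_exp_neg_le {s : ℝ} (hs0 : 0 ≤ s) (hs1 : s ≤ 1) :
    1 - exp (-s) ≤ s - s ^ 2 / 2 + s ^ 3 / 6 := by
  have h := exp_bound (x := -s) (by rwa [abs_neg, abs_of_nonneg hs0]) (n := 5) (by norm_num)
  have hsum : ∑ m ∈ Finset.range 5, (-s) ^ m / m.factorial
      = 1 - s + s ^ 2 / 2 - s ^ 3 / 6 + s ^ 4 / 24 := by
    simp only [Finset.sum_range_succ, Finset.sum_range_zero, Nat.factorial]; push_cast; ring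
  rw [hsum, abs_neg, abs_of_nonneg hs0] at h
  norm_num [Nat.factorial] at h
  nlinarith [abs_sub_le_iff.1 h, pow_le_pow_of_le_one hs0 hs1 (by norm_num : 4 ≤ 5),
    pow_nonneg hs0 4]

lemma one_sub_exp_neg_le_mul_millsLower_of_le {x s u w Su : ℝ} (hu : 0 < u) (hux : u ≤ x)
    (hs : 0 ≤ s) (hsw : s ≤ w) (hw : w ≤ 1) (hSu0 : 0 ≤ Su) (hSu : u ^ 2 + 6.283186 ≤ Su ^ 2)
    (hcert : (w - w ^ 2 / 2 + w ^ 3 / 6) * (2 * (Su + 2.141593 * u)) ≤ 3.141592 * u) :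
    1 - exp (-s) ≤ x * millsLower x / 2 := by
  -- `3.141592 < π < 3.141593` turns `hcert` into a rational inequality decidable by `norm_num`.
  have hden : 0 < Su + 2.141593 * u := by positivity
  calc 1 - exp (-s) ≤ 1 - exp (-w) := by gcongr
    _ ≤ w - w ^ 2 / 2 + w ^ 3 / 6 := one_sub_exp_neg_le (hs.trans hsw) hw
    _ ≤ u * (3.141592 / (Su + 2.141593 * u)) / 2 := by
      rw [mul_div_assoc', le_div_iff₀ two_pos, le_div_iff₀ hden]; linarith
    _ ≤ u * millsLower u / 2 := by gcongr; exact div_le_millsLower hu.le hSu0 hSu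
    _ ≤ x * millsLower x / 2 :=
      div_le_div_of_nonneg_right (monotoneOn_mul_millsLower hu (hu.trans_le hux) hux) two_pos.le

lemma one_sub_exp_neg_le_mul_millsLower {x L : ℝ} (hx : 1.45 ≤ x) (hL : 2 < L)
    (hLx : 1.5 ≤ x → x ^ 2 / 2 + 0.835 ≤ L) :
    1 - exp (-(x * √(2 * π) / (4 * L))) ≤ x * millsLower x / 2 := by
  have hs0 : 0 ≤ x * √(2 * π) / (4 * L) := by
    have : 0 ≤ x := by linarith
    positivity
  have hsqrt := sqrt_two_pi_lt
  rcases le_or_gt x 1.5 with hx' | hx'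
  · refine one_sub_exp_neg_le_mul_millsLower_of_le (u := 1.45) (w := 1.5 * 2.5066285 / 8)
      (Su := 2.89581) (by norm_num) hx hs0 ?_ (by norm_num) (by norm_num) (by norm_num)
      (by norm_num)
    rw [div_le_div_iff₀ (by positivity) (by norm_num)]
    nlinarith [sqrt_nonneg (2 * π)]
  · refine one_sub_exp_neg_le_mul_millsLower_of_le (u := 1.5) (w := 0.4796)
      (Su := 2.92117) (by norm_num) hx'.le hs0 ?_ (by norm_num) (by norm_num) (by norm_num)
      (by norm_num)
    have hL' := hLx hx'.le
    rw [div_le_iff₀ (by positivity)]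
    nlinarith [sqrt_nonneg (2 * π)]

lemma exp_neg_two_div_two_lt_gaussCdf : exp (-2) / 2 < gaussCdf (-1.45) := by
  have hφ : gaussPdf 1.45 = exp (-2) * (exp 0.94875 / √(2 * π)) := by
    rw [gaussPdf, mul_div_assoc', mul_comm, ← exp_add]; norm_num; ring
  have hexp := quadratic_le_exp_of_nonneg (x := 0.94875) (by norm_num)
  have hsqrt := sqrt_two_pi_lt
  have hratio : 1 / 2 < exp 0.94875 / √(2 * π) * (3.141592 / (2.89581 + 2.141593 * 1.45)) := by
    rw [div_mul_eq_mul_div, lt_div_iff₀ (by positivity)]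
    nlinarith [sqrt_nonneg (2 * π)]
  calc exp (-2) / 2 < gaussPdf 1.45 * (3.141592 / (2.89581 + 2.141593 * 1.45)) := by
        rw [hφ, mul_assoc]; nlinarith [exp_pos (-2)]
    _ ≤ gaussPdf 1.45 * millsLower 1.45 := by
        gcongr
        · exact (gaussPdf_pos _).le
        · exact div_le_millsLower (by norm_num) (by norm_num) (by norm_num)
    _ ≤ gaussCdf (-1.45) := gaussPdf_mul_millsLower_le_gaussCdf_neg (by norm_num)

lemma two_lt_log_one_div {ε : ℝ} (hε0 : 0 < ε) (hε : ε < exp (-2)) : 2 < log (1 / ε) := by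
  rw [one_div, log_inv, lt_neg]
  exact (log_lt_iff_lt_exp hε0).2 hε

lemma add_le_log_one_div_of_le_gaussCdf_neg {x ε : ℝ} (hx : 1.5 ≤ x) (hε : 0 < ε)
    (h : ε ≤ 2 * gaussCdf (-x)) : x ^ 2 / 2 + 0.835 ≤ log (1 / ε) := by
  have hexp : exp 0.835 < 2.31 := by
    have h1 : exp 0.835 * exp 0.165 = exp 1 := by rw [← exp_add]; norm_num
    nlinarith [exp_one_lt_d9, exp_pos 0.835, quadratic_le_exp_of_nonneg (x := 0.165) (by norm_num)]
  have hT : 2.19 ≤ √(x ^ 2 + 8 / π) := by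
    have : 2.5464 ≤ 8 / π := by rw [le_div_iff₀ pi_pos]; linarith [pi_lt_d6]
    exact (le_sqrt (by norm_num) (by positivity)).2 (by nlinarith)
  have hden : 2.31 * 4 ≤ √(2 * π) * (√(x ^ 2 + 8 / π) + x) := by
    nlinarith [lt_sqrt_two_pi, mul_le_mul lt_sqrt_two_pi.le (add_le_add hT hx) (by norm_num)
      (sqrt_nonneg (2 * π))]
  have hbound : 2 * (gaussPdf x * millsUpper x) ≤ exp (-(x ^ 2 / 2 + 0.835)) := by
    have hrw : 2 * (gaussPdf x * millsUpper x)
        = exp (-x ^ 2 / 2) * (4 / (√(2 * π) * (√(x ^ 2 + 8 / π) + x))) := by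
      unfold gaussPdf millsUpper; field_simp; ring
    rw [hrw, neg_add, ← neg_div, exp_add]
    gcongr
    calc 4 / (√(2 * π) * (√(x ^ 2 + 8 / π) + x)) ≤ 2.31⁻¹ := by
          rw [div_le_iff₀ (by positivity)]; linarith
      _ ≤ exp (-0.835) := by rw [exp_neg]; exact inv_anti₀ (exp_pos _) hexp.le
  have hup := gaussCdf_neg_le_gaussPdf_mul_millsUpper (by linarith : 1 ≤ x)
  rw [one_div, log_inv, le_neg, ← log_exp (-(x ^ 2 / 2 + 0.835))]
  exact log_le_log hε (by linarith)

theorem gaussCdf_inverse_quantile_gap (ε : ℝ) (hε0 : 0 < ε) (hε : ε < Real.exp (-2))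
    (a b : ℝ) (ha : gaussCdf a = ε / 2) (hb : gaussCdf b = ε / 4) :
    a - b ≥ Real.sqrt (2 * Real.pi) / (4 * Real.log (1 / ε)) := by
  have hx : 1.45 ≤ -a := by
    by_contra! h
    linarith [gaussCdf_mono (show (-1.45 : ℝ) ≤ a by linarith), exp_neg_two_div_two_lt_gaussCdf]
  have hba : b ≤ a := by
    by_contra! h
    linarith [gaussCdf_mono h.le]
  have hgap := mul_millsLower_le_one_sub_exp (x := -a) (y := -b) (by linarith) (by linarith)
    (by rw [neg_neg, neg_neg, ha, hb]; ring)
  have htail := one_sub_exp_neg_le_mul_millsLower hx (two_lt_log_one_div hε0 hε)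
    fun h => add_le_log_one_div_of_le_gaussCdf_neg h hε0 (by rw [neg_neg, ha]; linarith)
  have hmul := htail.trans hgap
  rw [sub_le_sub_iff_left, exp_le_exp, neg_le_neg_iff, mul_div_assoc, neg_sub_neg] at hmul
  exact le_of_mul_le_mul_left hmul (by linarith)

end
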